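/- arXiv:2305.17830 — 3 statements merged into one kernel-verified Lean document; each statement's English description precedes it below -/
import Mathlib

section
/- The scalar Riccati ODE φ̇_t = 2(a+q)φ_t − φ_t² + ε − q², with terminal condition φ_T = −c, where a > 0, q ≥ 0, c ≥ 0, ε ≥ q², admits a unique solution on [0, T], and this solution satisfies φ_t ≤ 0 for all t ∈ [0, T]. -/
open Set


noncomputable def riccH (b r c T t : ℝ) : ℝ :=
  (c + (b - r)) / (c + (b + r)) * Real.exp (2 * r * (t - T))

noncomputable def riccPhi (b r c T t : ℝ) : ℝ :=
  ((b - r) - (b + r) * riccH b r c T t) / (1 - riccH b r c T t)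

lemma riccH_hasDerivAt (b r c T t : ℝ) :
    HasDerivAt (riccH b r c T) (2 * r * riccH b r c T t) t := by
  have h1 : HasDerivAt (fun t : ℝ => 2 * r * (t - T)) (2 * r) t := by
    simpa using ((hasDerivAt_id t).sub_const T).const_mul (2 * r)
  have h2 := (h1.exp).const_mul ((c + (b - r)) / (c + (b + r)))
  unfold riccH
  simpa [mul_comm, mul_assoc, mul_left_comm] using h2

lemma riccH_bounds (b r c T : ℝ) (hb : 0 < b) (hbr : b ≤ r) (hc : 0 ≤ c)
    {t : ℝ} (ht : t ≤ T) : |riccH b r c T t| < 1 := by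
  have hcp : 0 < c + (b + r) := by linarith
  have hk : |(c + (b - r)) / (c + (b + r))| < 1 := by
    rw [abs_div, abs_of_pos hcp, div_lt_one hcp, abs_lt]
    constructor <;> nlinarith
  have he0 : 0 < Real.exp (2 * r * (t - T)) := Real.exp_pos _
  have he1 : Real.exp (2 * r * (t - T)) ≤ 1 := by
    rw [Real.exp_le_one_iff]
    nlinarith
  rw [riccH, abs_mul, abs_of_pos he0]
  nlinarith [abs_nonneg ((c + (b - r)) / (c + (b + r)))]

lemma riccPhi_hasDerivAt (b r c T : ℝ) (hb : 0 < b) (hbr : b ≤ r) (hc : 0 ≤ c)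
    {t : ℝ} (ht : t ≤ T) :
    HasDerivAt (riccPhi b r c T)
      (2 * b * riccPhi b r c T t - (riccPhi b r c T t) ^ 2 + (r ^ 2 - b ^ 2)) t := by
  have hd : 0 < 1 - riccH b r c T t := by
    have := riccH_bounds b r c T hb hbr hc ht
    rw [abs_lt] at this; linarith
  have hnum : HasDerivAt (fun s => (b - r) - (b + r) * riccH b r c T s)
      (-((b + r) * (2 * r * riccH b r c T t))) t :=
    (((riccH_hasDerivAt b r c T t).const_mul (b + r)).const_sub (b - r))
  have hden : HasDerivAt (fun s => 1 - riccH b r c T s)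
      (-(2 * r * riccH b r c T t)) t :=
    ((riccH_hasDerivAt b r c T t).const_sub 1)
  have h2 := hnum.div hden (ne_of_gt hd)
  have hφ : riccPhi b r c T = fun s =>
      ((b - r) - (b + r) * riccH b r c T s) / (1 - riccH b r c T s) := rfl
  rw [hφ]
  refine h2.congr_deriv (Eq.symm ?_)
  show 2 * b * riccPhi b r c T t - riccPhi b r c T t ^ 2 + (r ^ 2 - b ^ 2) = _
  unfold riccPhi
  set H := riccH b r c T t
  field_simp
  ring

lemma riccPhi_terminal (b r c T : ℝ) (hb : 0 < b) (hbr : b ≤ r) (hc : 0 ≤ c) :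
    riccPhi b r c T T = -c := by
  have hcp : 0 < c + (b + r) := by linarith
  have hd : 0 < 1 - riccH b r c T T := by
    have := riccH_bounds b r c T hb hbr hc (le_refl T)
    rw [abs_lt] at this; linarith
  have hH : riccH b r c T T = (c + (b - r)) / (c + (b + r)) := by
    simp [riccH]
  rw [riccPhi, hH]
  rw [hH] at hd
  rw [div_eq_iff (ne_of_gt hd)]
  field_simp
  ring

lemma riccPhi_nonpos (b r c T : ℝ) (hb : 0 < b) (hbr : b ≤ r) (hc : 0 ≤ c)
    {t : ℝ} (ht : t ≤ T) : riccPhi b r c T t ≤ 0 := by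
  have hcp : 0 < c + (b + r) := by linarith
  have hd : 0 < 1 - riccH b r c T t := by
    have := riccH_bounds b r c T hb hbr hc ht
    rw [abs_lt] at this; linarith
  rw [riccPhi]
  apply div_nonpos_of_nonpos_of_nonneg _ (le_of_lt hd)
  -- need (b - r) - (b + r) * H ≤ 0
  have he0 : 0 < Real.exp (2 * r * (t - T)) := Real.exp_pos _
  have he1 : Real.exp (2 * r * (t - T)) ≤ 1 := by
    rw [Real.exp_le_one_iff]; nlinarith
  rw [riccH]
  rcases le_or_gt 0 (c + (b - r)) with hk | hk
  · have hk0 : 0 ≤ (c + (b - r)) / (c + (b + r)) := div_nonneg hk (le_of_lt hcp)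
    nlinarith [mul_nonneg (mul_nonneg (show (0:ℝ) ≤ b + r by linarith) hk0) he0.le]
  · have hk2 : (b - r) ≤ (b + r) * ((c + (b - r)) / (c + (b + r))) := by
      rw [mul_div_assoc', le_div_iff₀ hcp]
      nlinarith
    have hkneg : (c + (b - r)) / (c + (b + r)) < 0 := div_neg_of_neg_of_pos hk hcp
    nlinarith

/-- **The minor bank's Riccati equation.** The scalar Riccati ODE
`φ̇ₜ = 2(a+q)φₜ − φₜ² + ε − q²` with terminal condition `φ_T = −c`, where
`a > 0`, `q ≥ 0`, `c ≥ 0`, `ε ≥ q²`, admits a unique solution on `[0,T]`,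
and this solution satisfies `φₜ ≤ 0` for all `t ∈ [0,T]`. -/
theorem riccati_exists_unique_nonpos (a q ε c T : ℝ) (ha : 0 < a)
    (hq : 0 ≤ q) (hc : 0 ≤ c) (hε : q ^ 2 ≤ ε) (hT : 0 < T) :
    ∃ φ : ℝ → ℝ,
      ((∀ t ∈ Icc (0 : ℝ) T,
          HasDerivWithinAt φ (2 * (a + q) * φ t - (φ t) ^ 2 + ε - q ^ 2)
            (Icc (0 : ℝ) T) t) ∧ φ T = -c) ∧
      (∀ ψ : ℝ → ℝ,
        ((∀ t ∈ Icc (0 : ℝ) T,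
            HasDerivWithinAt ψ (2 * (a + q) * ψ t - (ψ t) ^ 2 + ε - q ^ 2)
              (Icc (0 : ℝ) T) t) ∧ ψ T = -c) →
          ∀ t ∈ Icc (0 : ℝ) T, ψ t = φ t) ∧
      (∀ t ∈ Icc (0 : ℝ) T, φ t ≤ 0) := by
  have hb : 0 < a + q := by linarith
  set r := Real.sqrt ((a + q) ^ 2 + (ε - q ^ 2)) with hrdef
  have hr2 : r ^ 2 = (a + q) ^ 2 + (ε - q ^ 2) :=
    Real.sq_sqrt (by nlinarith [sq_nonneg (a + q)])
  have hbr : a + q ≤ r := by nlinarith [Real.sqrt_nonneg ((a + q) ^ 2 + (ε - q ^ 2))]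
  set φ := riccPhi (a + q) r c T with hφdef
  have hφ' : ∀ t ∈ Icc (0 : ℝ) T,
      HasDerivWithinAt φ (2 * (a + q) * φ t - (φ t) ^ 2 + ε - q ^ 2)
        (Icc (0 : ℝ) T) t := by
    intro t ht
    have h1 := (riccPhi_hasDerivAt (a + q) r c T hb hbr hc ht.2).hasDerivWithinAt
      (s := Icc (0 : ℝ) T)
    refine h1.congr_deriv ?_
    rw [hφdef]
    linarith
  refine ⟨φ, ⟨hφ', riccPhi_terminal (a + q) r c T hb hbr hc⟩, ?_, fun t ht =>
    riccPhi_nonpos (a + q) r c T hb hbr hc ht.2⟩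
  rintro ψ ⟨hψ', hψT⟩
  have hψc : ContinuousOn ψ (Icc 0 T) := fun t ht => (hψ' t ht).continuousWithinAt
  have hφc : ContinuousOn φ (Icc 0 T) := fun t ht => (hφ' t ht).continuousWithinAt
  obtain ⟨M1, hM1⟩ := (isCompact_Icc (a := (0:ℝ)) (b := T)).exists_bound_of_continuousOn hψc
  obtain ⟨M2, hM2⟩ := (isCompact_Icc (a := (0:ℝ)) (b := T)).exists_bound_of_continuousOn hφc
  set M := max M1 M2 with hMdef
  have hM0 : 0 ≤ M := le_trans (norm_nonneg (ψ 0))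
    (le_trans (hM1 0 ⟨le_refl 0, hT.le⟩) (le_max_left _ _))
  have hKnn : 0 ≤ 2 * (a + q) + 2 * M := by linarith
  have hv : ∀ t : ℝ, LipschitzOnWith (Real.toNNReal (2 * (a + q) + 2 * M))
      ((fun (_ : ℝ) (x : ℝ) => 2 * (a + q) * x - x ^ 2 + ε - q ^ 2) t)
      ((fun (_ : ℝ) => Icc (-M) M) t) := by
    intro t
    rw [lipschitzOnWith_iff_dist_le_mul]
    intro x hx y hy
    rw [Real.dist_eq, Real.dist_eq, Real.coe_toNNReal _ hKnn]
    have hkey : (2 * (a + q) * x - x ^ 2 + ε - q ^ 2) -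
        (2 * (a + q) * y - y ^ 2 + ε - q ^ 2) = (x - y) * (2 * (a + q) - (x + y)) := by
      ring
    rw [hkey, abs_mul]
    have h1 : |2 * (a + q) - (x + y)| ≤ 2 * (a + q) + 2 * M := by
      rw [abs_le]
      constructor
      · have := hx.2; have := hy.2; linarith
      · have := hx.1; have := hy.1; linarith
    calc |x - y| * |2 * (a + q) - (x + y)| ≤ |x - y| * (2 * (a + q) + 2 * M) :=
          mul_le_mul_of_nonneg_left h1 (abs_nonneg _)
      _ = (2 * (a + q) + 2 * M) * |x - y| := by ring
  have hIic : ∀ (f : ℝ → ℝ), (∀ t ∈ Icc (0 : ℝ) T,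
      HasDerivWithinAt f (2 * (a + q) * f t - (f t) ^ 2 + ε - q ^ 2) (Icc (0:ℝ) T) t) →
      ∀ t ∈ Ioc (0 : ℝ) T,
      HasDerivWithinAt f (2 * (a + q) * f t - (f t) ^ 2 + ε - q ^ 2) (Iic t) t := by
    intro f hf t ht
    have H := (hf t ⟨ht.1.le, ht.2⟩).mono (Icc_subset_Icc_right ht.2)
    rw [← Set.Iic_inter_Ici] at H
    exact (hasDerivWithinAt_inter (Ici_mem_nhds ht.1)).mp H
  have huniq := ODE_solution_unique_of_mem_Icc_left (v := fun (_ : ℝ) (x : ℝ) =>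
      2 * (a + q) * x - x ^ 2 + ε - q ^ 2) (s := fun _ => Icc (-M) M) (fun t _ => hv t)
    hψc (hIic ψ hψ') (fun t ht => by
      have := hM1 t ⟨ht.1.le, ht.2⟩
      rw [Real.norm_eq_abs, abs_le] at this
      exact ⟨by have := le_max_left M1 M2; linarith, le_trans this.2 (le_max_left _ _)⟩)
    hφc (hIic φ hφ') (fun t ht => by
      have := hM2 t ⟨ht.1.le, ht.2⟩
      rw [Real.norm_eq_abs, abs_le] at this
      exact ⟨by have := le_max_right M1 M2; linarith, le_trans this.2 (le_max_right _ _)⟩)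
    (by rw [hψT]; exact (riccPhi_terminal (a + q) r c T hb hbr hc).symm)
  exact fun t ht => huniq ht
end

section
/- Let φ solve φ̇_t = 2(a+q)φ_t − φ_t² + ε − q² on [0,T] with φ_T = −c, where a > 0, q ≥ 0, c ≥ 0 and ε ≥ q². Then the effective mean-reversion rate a + q − φ_t satisfies a + q − φ_t ≥ a + q > 0 for all t ∈ [0,T]; i.e., the optimal central-bank trading strictly increases the speed of mean reversion. -/
open Set

/-- If `φ` solves the minor bank's Riccati ODE
`φ̇ₜ = 2(a+q)φₜ − φₜ² + ε − q²` on `[0,T]` with `φ_T = −c`, where `a > 0`,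
`q ≥ 0`, `c ≥ 0`, `ε ≥ q²`, then the effective mean-reversion rate
`a + q − φₜ` satisfies `a + q − φₜ ≥ a + q > 0` for all `t ∈ [0,T]`: the
optimal central-bank trading strictly increases the speed of mean
reversion. -/
theorem effective_mean_reversion_increased (a q ε c T : ℝ) (ha : 0 < a)
    (hq : 0 ≤ q) (hc : 0 ≤ c) (hε : q ^ 2 ≤ ε) (hT : 0 < T) (φ : ℝ → ℝ)
    (hφ : ∀ t ∈ Icc (0 : ℝ) T,
      HasDerivWithinAt φ (2 * (a + q) * φ t - (φ t) ^ 2 + ε - q ^ 2)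
        (Icc (0 : ℝ) T) t)
    (hφT : φ T = -c) :
    (∀ t ∈ Icc (0 : ℝ) T, a + q ≤ a + q - φ t) ∧ 0 < a + q := by
  refine ⟨?_, by positivity⟩
  intro t ht
  suffices h : φ t ≤ 0 by linarith
  by_contra hpos
  push_neg at hpos
  have hcont : ContinuousOn φ (Icc 0 T) := fun u hu => (hφ u hu).continuousWithinAt
  obtain ⟨C, hC⟩ := (isCompact_Icc : IsCompact (Icc (0:ℝ) T)).exists_bound_of_continuousOn hcont
  have hCle : ∀ u ∈ Icc (0:ℝ) T, φ u ≤ C := fun u hu =>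
    (le_abs_self _).trans (by simpa using hC u hu)
  obtain ⟨ht0, htT⟩ := ht
  set S : Set ℝ := {u | u ∈ Icc t T ∧ ∀ v ∈ Icc t u, 0 ≤ φ v} with hS
  have htS : t ∈ S := ⟨⟨le_refl t, htT⟩, fun v hv => by
    have : v = t := le_antisymm hv.2 hv.1
    rw [this]; exact hpos.le⟩
  have hSne : S.Nonempty := ⟨t, htS⟩
  have hSbdd : BddAbove S := ⟨T, fun u hu => hu.1.2⟩
  set s := sSup S with hs
  have hts : t ≤ s := le_csSup hSbdd htS
  have hsT : s ≤ T := csSup_le hSne (fun u hu => hu.1.2)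
  have hsIcc : s ∈ Icc (0:ℝ) T := ⟨le_trans ht0 hts, hsT⟩
  -- φ is nonnegative on [t, s]
  have hSnonneg : ∀ v ∈ Icc t s, 0 ≤ φ v := by
    intro v hv
    rcases lt_or_eq_of_le hv.2 with hvs | hvs
    · obtain ⟨u, huS, hvu⟩ := exists_lt_of_lt_csSup hSne hvs
      exact huS.2 v ⟨hv.1, hvu.le⟩
    · rw [hvs]
      by_contra hneg
      push_neg at hneg
      have hcs : ContinuousWithinAt φ (Icc 0 T) s := hcont s hsIcc
      have hmem : {u | φ u < 0} ∈ nhdsWithin s (Icc (0:ℝ) T) := by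
        exact hcs (Iio_mem_nhds hneg)
      rw [Metric.mem_nhdsWithin_iff] at hmem
      obtain ⟨δ, hδ, hball⟩ := hmem
      obtain ⟨u, huS, hu⟩ := exists_lt_of_lt_csSup hSne (show s - δ < sSup S by
        rw [← hs]; linarith)
      have huv : u ≤ s := le_csSup hSbdd huS
      have : φ u < 0 := hball ⟨by
        simp only [Metric.mem_ball, Real.dist_eq]
        rw [abs_sub_lt_iff]; constructor <;> linarith, ⟨le_trans ht0 huS.1.1, huS.1.2⟩⟩
      have : 0 ≤ φ u := huS.2 u ⟨huS.1.1, le_refl u⟩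
      linarith
  -- monotonicity of g u = φ u * exp (C * u) on [t, s] gives φ s > 0
  have hφs : 0 < φ s := by
    set g : ℝ → ℝ := fun u => φ u * Real.exp (C * u) with hg
    have hmono : MonotoneOn g (Icc t s) := by
      apply monotoneOn_of_deriv_nonneg (convex_Icc t s)
      · exact (hcont.mono (Icc_subset_Icc ht0 hsT)).mul
          (Real.continuous_exp.comp (continuous_const.mul continuous_id)).continuousOn
      all_goals
        intro x hx
        rw [interior_Icc] at hx
        have hxIcc : x ∈ Icc (0:ℝ) T := ⟨le_trans ht0 hx.1.le, le_trans hx.2.le hsT⟩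
        have hxint : Icc (0:ℝ) T ∈ nhds x := Icc_mem_nhds (lt_of_le_of_lt ht0 hx.1) (lt_of_lt_of_le hx.2 hsT)
        have hdφ : HasDerivAt φ (2 * (a + q) * φ x - (φ x) ^ 2 + ε - q ^ 2) x :=
          (hφ x hxIcc).hasDerivAt hxint
        have hde : HasDerivAt (fun u => Real.exp (C * u)) (Real.exp (C * x) * C) x := by
          have h1 : HasDerivAt (fun u : ℝ => C * u) C x := by
            simpa using (hasDerivAt_id x).const_mul C
          exact h1.exp
        have hdg : HasDerivAt g ((2 * (a + q) * φ x - (φ x) ^ 2 + ε - q ^ 2) * Real.exp (C * x)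
            + φ x * (Real.exp (C * x) * C)) x := hdφ.mul hde
      · exact hdg.differentiableAt.differentiableWithinAt
      · rw [hdg.deriv]
        have hx0 : 0 ≤ φ x := hSnonneg x ⟨hx.1.le, hx.2.le⟩
        have hxC : φ x ≤ C := hCle x hxIcc
        have hexp : 0 < Real.exp (C * x) := Real.exp_pos _
        have key : 0 ≤ 2 * (a + q) * φ x - (φ x) ^ 2 + ε - q ^ 2 + φ x * C := by
          nlinarith [mul_nonneg hx0 (sub_nonneg.2 hxC), mul_nonneg (by positivity : (0:ℝ) ≤ 2 * (a + q)) hx0]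
        nlinarith
    have := hmono ⟨le_refl t, hts⟩ ⟨hts, le_refl s⟩ hts
    simp only [hg] at this
    have hexp : 0 < Real.exp (C * t) := Real.exp_pos _
    nlinarith [Real.exp_pos (C * s)]
  -- s must equal T, otherwise we can extend
  have hsT' : s = T := by
    by_contra hne
    have hslt : s < T := lt_of_le_of_ne hsT hne
    have hcs : ContinuousWithinAt φ (Icc 0 T) s := hcont s hsIcc
    have hmem : {u | 0 < φ u} ∈ nhdsWithin s (Icc (0:ℝ) T) := hcs (Ioi_mem_nhds hφs)
    rw [Metric.mem_nhdsWithin_iff] at hmem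
    obtain ⟨δ, hδ, hball⟩ := hmem
    set u := min (s + δ / 2) T with hu
    have hsu : s < u := lt_min (by linarith) hslt
    have huT : u ≤ T := min_le_right _ _
    have huS : u ∈ S := by
      refine ⟨⟨le_trans hts hsu.le, huT⟩, fun v hv => ?_⟩
      rcases le_or_gt v s with hvs | hvs
      · exact hSnonneg v ⟨hv.1, hvs⟩
      · have hvIcc : v ∈ Icc (0:ℝ) T := ⟨le_trans ht0 hv.1, le_trans hv.2 huT⟩
        have : v ∈ Metric.ball s δ := by
          simp only [Metric.mem_ball, Real.dist_eq]
          rw [abs_sub_lt_iff]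
          have : v ≤ s + δ / 2 := le_trans hv.2 (min_le_left _ _)
          constructor <;> linarith
        exact (hball ⟨this, hvIcc⟩).le
    have := le_csSup hSbdd huS
    rw [← hs] at this
    linarith
  rw [hsT', hφT] at hφs
  linarith
end

section
/- Suppose φ: [0,T] → ℝ solves the minor-bank Riccati equation φ̇_t = 2(a+q)φ_t − φ_t² + ε − q² with φ_T = −c, and φ^0: [0,T] → ℝ solves the major-bank Riccati equation φ̇_t^0 = 2(a_0+q_0)φ_t^0 − (φ_t^0)² + (a + q − φ_t) G φ_t^0 + ε_0 − q_0² with φ_T^0 = −c_0, where a, a_0 > 0, q, q_0 ≥ 0, c, c_0 ≥ 0, ε ≥ q², ε_0 ≥ q_0², G ∈ [0,1]. Then φ_t^0 ≤ 0 for all t ∈ [0,T], and hence the major bank's optimal feedback gain q_0 − φ_t^0 is nonnegative. -/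
open Set

/-- **Sign of the major bank's Riccati solution.** Suppose `φ` solves the
minor-bank Riccati equation `φ̇ₜ = 2(a+q)φₜ − φₜ² + ε − q²` with `φ_T = −c`,
and `φ⁰` solves the major-bank Riccati equation
`φ̇⁰ₜ = 2(a₀+q₀)φ⁰ₜ − (φ⁰ₜ)² + (a + q − φₜ) G φ⁰ₜ + ε₀ − q₀²` with
`φ⁰_T = −c₀`, where `a, a₀ > 0`, `q, q₀ ≥ 0`, `c, c₀ ≥ 0`, `ε ≥ q²`,
`ε₀ ≥ q₀²`, `G ∈ [0,1]`. Then `φ⁰ₜ ≤ 0` on `[0,T]`, hence the major bank's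
optimal feedback gain `q₀ − φ⁰ₜ` is nonnegative. -/
theorem major_riccati_nonpos (a a0 q q0 ε ε0 c c0 G T : ℝ)
    (ha : 0 < a) (ha0 : 0 < a0) (hq : 0 ≤ q) (hq0 : 0 ≤ q0)
    (hc : 0 ≤ c) (hc0 : 0 ≤ c0) (hε : q ^ 2 ≤ ε) (hε0 : q0 ^ 2 ≤ ε0)
    (hG : G ∈ Icc (0 : ℝ) 1) (hT : 0 < T) (φ φ0 : ℝ → ℝ)
    (hφ : ∀ t ∈ Icc (0 : ℝ) T,
      HasDerivWithinAt φ (2 * (a + q) * φ t - (φ t) ^ 2 + ε - q ^ 2)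
        (Icc (0 : ℝ) T) t)
    (hφT : φ T = -c)
    (hφ0 : ∀ t ∈ Icc (0 : ℝ) T,
      HasDerivWithinAt φ0
        (2 * (a0 + q0) * φ0 t - (φ0 t) ^ 2 + (a + q - φ t) * G * φ0 t
          + ε0 - q0 ^ 2)
        (Icc (0 : ℝ) T) t)
    (hφ0T : φ0 T = -c0) :
    (∀ t ∈ Icc (0 : ℝ) T, φ0 t ≤ 0) ∧
      (∀ t ∈ Icc (0 : ℝ) T, 0 ≤ q0 - φ0 t) := by
  -- clamp to [0,T]
  set cl : ℝ → ℝ := fun t => max 0 (min t T) with hcl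
  have hclmem : ∀ t, cl t ∈ Icc (0 : ℝ) T := fun t =>
    ⟨le_max_left _ _, max_le hT.le (min_le_right _ _)⟩
  have hcleq : ∀ t ∈ Icc (0 : ℝ) T, cl t = t := by
    intro t ht
    simp only [hcl]
    rw [min_eq_left ht.2, max_eq_right ht.1]
  have hclcont : Continuous cl := continuous_const.max (continuous_id.min continuous_const)
  have hφcont : ContinuousOn φ (Icc 0 T) := fun t ht =>
    (hφ t ht).continuousWithinAt
  have hφ0cont : ContinuousOn φ0 (Icc 0 T) := fun t ht =>
    (hφ0 t ht).continuousWithinAt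
  -- the linear coefficient, extended continuously to ℝ
  set L : ℝ → ℝ := fun t =>
    2 * (a0 + q0) - φ0 (cl t) + (a + q - φ (cl t)) * G with hL
  have hLcont : Continuous L := by
    have h1 : Continuous fun t => φ0 (cl t) :=
      hφ0cont.comp_continuous hclcont hclmem
    have h2 : Continuous fun t => φ (cl t) :=
      hφcont.comp_continuous hclcont hclmem
    exact (continuous_const.sub h1).add ((continuous_const.sub h2).mul continuous_const)
  set P : ℝ → ℝ := fun t => ∫ s in (0:ℝ)..t, L s with hP
  have hPderiv : ∀ t : ℝ, HasDerivAt P (L t) t := fun t =>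
    (hLcont.integral_hasStrictDerivAt 0 t).hasDerivAt
  -- the integrating-factor function
  set h : ℝ → ℝ := fun t => φ0 t * Real.exp (-P t) with hh
  have hhderiv : ∀ t ∈ Icc (0 : ℝ) T,
      HasDerivWithinAt h ((ε0 - q0 ^ 2) * Real.exp (-P t)) (Icc (0 : ℝ) T) t := by
    intro t ht
    have hE : HasDerivAt (fun s => Real.exp (-P s)) (-L t * Real.exp (-P t)) t := by
      have := ((hPderiv t).neg).exp
      simpa [mul_comm] using this
    have := (hφ0 t ht).mul hE.hasDerivWithinAt
    refine this.congr_deriv ?_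
    simp only [hL, hcleq t ht]
    ring
  have hmono : MonotoneOn h (Icc (0 : ℝ) T) := by
    apply monotoneOn_of_hasDerivWithinAt_nonneg (convex_Icc 0 T)
      (f' := fun t => (ε0 - q0 ^ 2) * Real.exp (-P t))
    · exact fun t ht => (hhderiv t ht).continuousWithinAt
    · intro x hx
      exact (hhderiv x (interior_subset hx)).mono interior_subset
    · intro x _
      exact mul_nonneg (by linarith) (Real.exp_pos _).le
  have key : ∀ t ∈ Icc (0 : ℝ) T, φ0 t ≤ 0 := by
    intro t ht
    have hTmem : T ∈ Icc (0 : ℝ) T := ⟨hT.le, le_rfl⟩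
    have := hmono ht hTmem ht.2
    have hhT : h T ≤ 0 := by
      rw [hh]
      simp only [hφ0T]
      exact mul_nonpos_of_nonpos_of_nonneg (by linarith) (Real.exp_pos _).le
    have hht : h t ≤ 0 := le_trans this hhT
    simp only [hh] at hht
    nlinarith [hht, Real.exp_pos (-P t)]
  exact ⟨key, fun t ht => by have := key t ht; linarith⟩
end
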